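/- arXiv:2203.03539 — 2 statements merged into one kernel-verified Lean document; each statement's English description precedes it below -/
import Mathlib

section
/- Robustness of linear recovery: let f* (x) = A^{⊗t} vec(E[w^{⊗t}|x]) be the exact t-word posterior and suppose f satisfies E_x[KL(f*(x) || f(x))] ≤ ε. Then with θ = ((A†)^{⊗t})ᵀ β, one has E_x[(E[P(w)|x] - θᵀ f(x))^2] ≤ 2||β||_2^2 · κ(A†)^{2t} · ε, where E[P(w)|x] = βᵀ vec(E[w^{⊗t}|x]). -/
/-- `t`-fold Kronecker power of a matrix, `(A^{⊗t})_{u,z} = ∏ i, A_{u i, z i}`. -/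
def kronPow {α β : Type*} (A : Matrix α β ℝ) (t : ℕ) :
    Matrix (Fin t → α) (Fin t → β) ℝ :=
  fun u z => ∏ i, A (u i) (z i)

/-- Moore–Penrose left pseudo-inverse `A† = (AᵀA)⁻¹Aᵀ`. -/
noncomputable def leftPinv {α β : Type*} [Fintype α] [Fintype β] [DecidableEq β]
    (A : Matrix α β ℝ) : Matrix β α ℝ :=
  (A.transpose * A)⁻¹ * A.transpose

/-- ℓ¹ condition number: `κ(M) = sup_{v ≠ 0} ‖Mv‖₁ / ‖v‖₁`. -/
noncomputable def l1CondNum {α β : Type*} [Fintype α] [Fintype β]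
    (M : Matrix α β ℝ) : ℝ :=
  sSup {c : ℝ | ∃ v : β → ℝ, v ≠ 0 ∧
    c = (∑ i, |M.mulVec v i|) / (∑ j, |v j|)}

/-- KL divergence between finite distributions. -/
noncomputable def klDiv {α : Type*} [Fintype α] (p q : α → ℝ) : ℝ :=
  ∑ k, p k * Real.log (p k / q k)

/-!
Since `A† A = 1` and Kronecker powers are multiplicative, `(A†)^{⊗t}` recovers
`vec E[w^{⊗t}|x]` from `f*(x)` exactly, so the error at `x` is `βᵀ (A†)^{⊗t} (f*(x) - f(x))`.
Cauchy–Schwarz, `‖·‖₂ ≤ ‖·‖₁`, the ℓ¹ operator bound `κ(A†)^t` for `(A†)^{⊗t}` (its column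
sums are products of column sums of `A†`) and Pinsker's inequality bound the square of this
error by `2 ‖β‖₂² κ(A†)^{2t} KL(f*(x) ‖ f(x))`; averaging over `x` gives the claim.
Pinsker's inequality itself follows from the pointwise bound
`x log x - x + 1 ≥ 3 (x - 1)² / (2 (x + 2))` and Sedrakyan's form of Cauchy–Schwarz.
-/

open Finset Real

theorem ConvexOn.isMinOn_of_hasDerivAt_eq_zero {S : Set ℝ} {f : ℝ → ℝ} {a : ℝ}
    (hf : ConvexOn ℝ S f) (ha : a ∈ S) (hd : HasDerivAt f 0 a) : IsMinOn f S a := by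
  refine isMinOn_iff.2 fun y hy => ?_
  rcases lt_trichotomy a y with hay | rfl | hya
  · have := hf.le_slope_of_hasDerivAt ha hy hay hd
    rw [slope_def_field, le_div_iff₀ (sub_pos.2 hay)] at this
    linarith
  · exact le_rfl
  · have := hf.slope_le_of_hasDerivAt hy ha hya hd
    rw [slope_def_field, div_le_iff₀ (sub_pos.2 hya)] at this
    linarith

/-- `klFun x - 3 (x - 1)² / (2 (x + 2))`, written in partial fractions. -/
noncomputable def pinskerGap (x : ℝ) : ℝ :=
  InformationTheory.klFun x - 3 / 2 * (x - 4) - 27 / 2 * (x + 2)⁻¹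

lemma hasDerivAt_pinskerGap {x : ℝ} (hx : 0 < x) :
    HasDerivAt pinskerGap (log x - 3 / 2 + 27 / 2 * ((x + 2) ^ 2)⁻¹) x := by
  refine (((InformationTheory.hasDerivAt_klFun hx.ne').sub
    (((hasDerivAt_id x).sub_const 4).const_mul (3 / 2))).sub
    ((((hasDerivAt_id x).add_const 2).inv (by positivity)).const_mul (27 / 2))).congr_deriv ?_
  simp only [id]
  ring

lemma hasDerivAt_deriv_pinskerGap {x : ℝ} (hx : 0 < x) :
    HasDerivAt (fun y => log y - 3 / 2 + 27 / 2 * ((y + 2) ^ 2)⁻¹)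
      (x⁻¹ - 27 * ((x + 2) ^ 3)⁻¹) x := by
  refine (((hasDerivAt_log hx.ne').sub_const (3 / 2)).add
    (((((hasDerivAt_id x).add_const 2).pow 2).inv (by simp; positivity)).const_mul
      (27 / 2))).congr_deriv ?_
  simp only [id, Pi.pow_apply]
  field_simp
  ring

lemma convexOn_pinskerGap : ConvexOn ℝ (Set.Ici 0) pinskerGap := by
  refine convexOn_of_hasDerivWithinAt2_nonneg (convex_Ici 0)
    (f' := fun y => log y - 3 / 2 + 27 / 2 * ((y + 2) ^ 2)⁻¹)
    (f'' := fun y => y⁻¹ - 27 * ((y + 2) ^ 3)⁻¹) ?_ ?_ ?_ ?_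
  · have : ∀ y ∈ Set.Ici (0 : ℝ), y + 2 ≠ 0 := fun y (hy : 0 ≤ y) => by positivity
    have := InformationTheory.continuous_klFun
    unfold pinskerGap
    fun_prop (disch := assumption)
  · rw [interior_Ici]
    exact fun y hy => (hasDerivAt_pinskerGap hy).hasDerivWithinAt
  · rw [interior_Ici]
    exact fun y hy => (hasDerivAt_deriv_pinskerGap hy).hasDerivWithinAt
  · rw [interior_Ici]
    intro y (hy : 0 < y)
    -- `(y + 2) ^ 3 ≥ 27 y` is AM-GM for `y, 1, 1`.
    rw [sub_nonneg, ← div_eq_mul_inv, inv_eq_one_div, div_le_div_iff₀ (by positivity) hy]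
    nlinarith [mul_nonneg (sq_nonneg (y - 1)) (by linarith : (0 : ℝ) ≤ y + 8)]

lemma pinskerGap_nonneg {x : ℝ} (hx : 0 ≤ x) : 0 ≤ pinskerGap x := by
  have hmin := convexOn_pinskerGap.isMinOn_of_hasDerivAt_eq_zero (Set.mem_Ici.2 zero_le_one)
    ((hasDerivAt_pinskerGap one_pos).congr_deriv (by norm_num)) (Set.mem_Ici.2 hx)
  have hgap_one : pinskerGap 1 = 0 := by
    rw [pinskerGap, InformationTheory.klFun_one]
    norm_num
  rwa [hgap_one] at hmin

lemma three_mul_sq_div_le_klFun {x : ℝ} (hx : 0 ≤ x) :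
    3 * (x - 1) ^ 2 / (2 * (x + 2)) ≤ InformationTheory.klFun x := by
  have hx2 : x + 2 ≠ 0 := by positivity
  have hsplit : 3 * (x - 1) ^ 2 / (2 * (x + 2)) = 3 / 2 * (x - 4) + 27 / 2 * (x + 2)⁻¹ := by
    field_simp
    ring
  have := pinskerGap_nonneg hx
  rw [pinskerGap] at this
  linarith

lemma three_mul_sq_sub_div_le_mul_log_div {p q : ℝ} (hp : 0 ≤ p) (hq : 0 < q) :
    3 * (p - q) ^ 2 / (2 * (p + 2 * q)) ≤ p * log (p / q) - p + q := by
  have hq0 : q ≠ 0 := hq.ne'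
  have hpq : p / q + 2 ≠ 0 := by positivity
  calc 3 * (p - q) ^ 2 / (2 * (p + 2 * q)) = q * (3 * (p / q - 1) ^ 2 / (2 * (p / q + 2))) := by
        field_simp
    _ ≤ q * InformationTheory.klFun (p / q) := by
        gcongr
        exact three_mul_sq_div_le_klFun (div_nonneg hp hq.le)
    _ = p * log (p / q) - p + q := by
        rw [InformationTheory.klFun_apply]
        linear_combination (log (p / q) - 1) * mul_div_cancel₀ p hq0

theorem sq_sum_abs_sub_le_two_mul_klDiv {ι : Type*} [Fintype ι] {p q : ι → ℝ}
    (hp : ∀ k, 0 ≤ p k) (hq : ∀ k, 0 < q k) (hp_sum : ∑ k, p k = 1) (hq_sum : ∑ k, q k = 1) :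
    (∑ k, |p k - q k|) ^ 2 ≤ 2 * klDiv p q := by
  set w : ι → ℝ := fun k => 2 * (p k + 2 * q k) / 3
  have hw : ∀ k ∈ univ, 0 < w k := fun k _ => by have := hp k; have := hq k; positivity
  have hw_sum : ∑ k, w k = 2 := by
    simp only [w, ← sum_div, ← mul_sum, sum_add_distrib, hp_sum, hq_sum]
    norm_num
  have hklDiv : klDiv p q = ∑ k, (p k * log (p k / q k) - p k + q k) := by
    simp only [klDiv, sum_add_distrib, sum_sub_distrib, hp_sum, hq_sum]
    ring
  calc (∑ k, |p k - q k|) ^ 2 = 2 * ((∑ k, |p k - q k|) ^ 2 / ∑ k, w k) := by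
        rw [hw_sum]
        ring
    _ ≤ 2 * ∑ k, |p k - q k| ^ 2 / w k := by
        gcongr
        exact sq_sum_div_le_sum_sq_div univ _ hw
    _ ≤ 2 * klDiv p q := by
      rw [hklDiv]
      gcongr with k
      have hpq : p k + 2 * q k ≠ 0 := by have := hp k; have := hq k; positivity
      calc |p k - q k| ^ 2 / w k = 3 * (p k - q k) ^ 2 / (2 * (p k + 2 * q k)) := by
            rw [sq_abs]
            simp only [w]
            field_simp
        _ ≤ _ := three_mul_sq_sub_div_le_mul_log_div (hp k) (hq k)

section KroneckerPower

variable {l m n : Type*}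

theorem kronPow_mul [Fintype m] (M : Matrix l m ℝ) (N : Matrix m n ℝ) (t : ℕ) :
    kronPow M t * kronPow N t = kronPow (M * N) t := by
  ext u z
  simp only [Matrix.mul_apply, kronPow, Fintype.prod_sum, prod_mul_distrib]

theorem kronPow_one [DecidableEq m] (t : ℕ) : kronPow (1 : Matrix m m ℝ) t = 1 := by
  ext u z
  by_cases h : u = z
  · subst h
    simp [kronPow]
  · obtain ⟨i, hi⟩ := Function.ne_iff.mp h
    rw [Matrix.one_apply_ne h]
    exact prod_eq_zero (mem_univ i) (Matrix.one_apply_ne hi)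

end KroneckerPower

theorem leftPinv_mul_self {m n : Type*} [Fintype m] [Fintype n] [DecidableEq n]
    (A : Matrix m n ℝ) (hA : A.rank = Fintype.card n) : leftPinv A * A = 1 := by
  have hrange : LinearMap.range (A.transpose * A).mulVecLin = ⊤ := by
    apply Submodule.eq_top_of_finrank_eq
    rw [Module.finrank_fintype_fun_eq_card, ← hA, ← Matrix.rank_transpose_mul_self]
    rfl
  have hunit : IsUnit (A.transpose * A) :=
    (Matrix.mulVec_surjective_iff_isUnit).1 (LinearMap.range_eq_top.1 hrange)
  rw [leftPinv, Matrix.mul_assoc, Matrix.nonsing_inv_mul _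
    ((Matrix.isUnit_iff_isUnit_det _).1 hunit)]

theorem kronPow_leftPinv_mulVec_kronPow_mulVec {m n : Type*} [Fintype m] [Fintype n]
    [DecidableEq n] (A : Matrix m n ℝ) (hA : A.rank = Fintype.card n) (t : ℕ)
    (w : (Fin t → n) → ℝ) :
    (kronPow (leftPinv A) t).mulVec ((kronPow A t).mulVec w) = w := by
  rw [Matrix.mulVec_mulVec, kronPow_mul, leftPinv_mul_self A hA, kronPow_one, Matrix.one_mulVec]

section L1Bounds

variable {m n : Type*} [Fintype m] [Fintype n]

theorem sum_abs_mulVec_le_of_sum_abs_col_le (M : Matrix m n ℝ) {C : ℝ}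
    (hC : ∀ j, ∑ i, |M i j| ≤ C) (v : n → ℝ) :
    ∑ i, |M.mulVec v i| ≤ C * ∑ j, |v j| := by
  calc ∑ i, |M.mulVec v i| ≤ ∑ i, ∑ j, |M i j| * |v j| := by
        gcongr with i
        simpa only [Matrix.mulVec, dotProduct, abs_mul] using
          abs_sum_le_sum_abs (fun j => M i j * v j) univ
    _ = ∑ j, (∑ i, |M i j|) * |v j| := by
        rw [sum_comm]
        simp only [sum_mul]
    _ ≤ ∑ j, C * |v j| := by gcongr with j; exact hC j
    _ = C * ∑ j, |v j| := (mul_sum _ _ _).symm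

theorem bddAbove_l1CondNum_set (M : Matrix m n ℝ) :
    BddAbove {c : ℝ | ∃ v : n → ℝ, v ≠ 0 ∧
      c = (∑ i, |M.mulVec v i|) / (∑ j, |v j|)} := by
  refine ⟨∑ j, ∑ i, |M i j|, ?_⟩
  rintro c ⟨v, hv, rfl⟩
  apply div_le_of_le_mul₀ (sum_nonneg fun j _ => abs_nonneg _)
    (sum_nonneg fun j _ => sum_nonneg fun i _ => abs_nonneg _)
  refine sum_abs_mulVec_le_of_sum_abs_col_le M (fun j => ?_) v
  exact single_le_sum (f := fun j => ∑ i, |M i j|)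
    (fun j _ => sum_nonneg fun i _ => abs_nonneg _) (mem_univ j)

theorem l1CondNum_nonneg (M : Matrix m n ℝ) : 0 ≤ l1CondNum M := by
  refine Real.sSup_nonneg ?_
  rintro c ⟨v, -, rfl⟩
  positivity

theorem sum_abs_col_le_l1CondNum (M : Matrix m n ℝ) (j : n) :
    ∑ i, |M i j| ≤ l1CondNum M := by
  classical
  refine le_csSup (bddAbove_l1CondNum_set M) ⟨Pi.single j 1, ?_, ?_⟩
  · simp
  · have : ∑ k, |(Pi.single j 1 : n → ℝ) k| = 1 := by simp [Pi.single_apply, apply_ite abs]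
    simp [Matrix.mulVec_single, this]

theorem sum_abs_kronPow_mulVec_le (M : Matrix m n ℝ) (t : ℕ) (w : (Fin t → n) → ℝ) :
    ∑ z, |(kronPow M t).mulVec w z| ≤ l1CondNum M ^ t * ∑ u, |w u| := by
  refine sum_abs_mulVec_le_of_sum_abs_col_le _ (fun u => ?_) w
  calc ∑ z, |kronPow M t z u| = ∏ i, ∑ a, |M a (u i)| := by
        simp only [kronPow, abs_prod, Fintype.prod_sum]
    _ ≤ ∏ _i : Fin t, l1CondNum M :=
        prod_le_prod (fun i _ => sum_nonneg fun a _ => abs_nonneg _)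
          (fun i _ => sum_abs_col_le_l1CondNum M (u i))
    _ = l1CondNum M ^ t := by rw [prod_const, card_univ, Fintype.card_fin]

end L1Bounds

theorem sq_dotProduct_le_sum_sq_mul_sq_sum_abs {ι : Type*} [Fintype ι] (b v : ι → ℝ) :
    (b ⬝ᵥ v) ^ 2 ≤ (∑ i, b i ^ 2) * (∑ i, |v i|) ^ 2 := by
  calc (b ⬝ᵥ v) ^ 2 ≤ (∑ i, b i ^ 2) * ∑ i, |v i| ^ 2 := by
        simpa only [dotProduct, sq_abs] using sum_mul_sq_le_sq_mul_sq univ b v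
    _ ≤ (∑ i, b i ^ 2) * (∑ i, |v i|) ^ 2 := by
        gcongr
        exact sum_sq_le_sq_sum_of_nonneg fun i _ => abs_nonneg _

theorem sq_recovery_error_le_klDiv {m n : Type*} [Fintype m] [Fintype n] [DecidableEq n]
    (A : Matrix m n ℝ) (hA : A.rank = Fintype.card n) {t : ℕ} (w : (Fin t → n) → ℝ)
    {p q : (Fin t → m) → ℝ} (hpw : p = (kronPow A t).mulVec w)
    (hp : ∀ u, 0 ≤ p u) (hq : ∀ u, 0 < q u) (hp_sum : ∑ u, p u = 1) (hq_sum : ∑ u, q u = 1)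
    (β : (Fin t → n) → ℝ) :
    (β ⬝ᵥ w - (kronPow (leftPinv A) t).transpose.mulVec β ⬝ᵥ q) ^ 2 ≤
      2 * (∑ z, β z ^ 2) * l1CondNum (leftPinv A) ^ (2 * t) * klDiv p q := by
  set M := kronPow (leftPinv A) t
  have herror : β ⬝ᵥ w - M.transpose.mulVec β ⬝ᵥ q = β ⬝ᵥ M.mulVec (p - q) := by
    rw [Matrix.mulVec_sub, dotProduct_sub, hpw, kronPow_leftPinv_mulVec_kronPow_mulVec A hA,
      dotProduct_comm _ q, Matrix.dotProduct_transpose_mulVec]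
  rw [herror]
  calc (β ⬝ᵥ M.mulVec (p - q)) ^ 2
      ≤ (∑ z, β z ^ 2) * (∑ z, |M.mulVec (p - q) z|) ^ 2 :=
        sq_dotProduct_le_sum_sq_mul_sq_sum_abs _ _
    _ ≤ (∑ z, β z ^ 2) * (l1CondNum (leftPinv A) ^ t * ∑ u, |p u - q u|) ^ 2 := by
        gcongr
        exact sum_abs_kronPow_mulVec_le _ t (p - q)
    _ ≤ (∑ z, β z ^ 2) * (l1CondNum (leftPinv A) ^ t) ^ 2 * (2 * klDiv p q) := by
        rw [mul_pow, ← mul_assoc]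
        gcongr
        exact sq_sum_abs_sub_le_two_mul_klDiv hp hq hp_sum hq_sum
    _ = 2 * (∑ z, β z ^ 2) * l1CondNum (leftPinv A) ^ (2 * t) * klDiv p q := by ring

theorem robust_linear_recovery_general {V K t : ℕ} {X : Type*} [Fintype X]
    (A : Matrix (Fin V) (Fin K) ℝ) (hrank : A.rank = K)
    (μ : X → ℝ) (hμ_nonneg : ∀ x, 0 ≤ μ x)
    (wp : X → (Fin t → Fin K) → ℝ)
    (fstar f : X → (Fin t → Fin V) → ℝ)
    (hfstar : ∀ x, fstar x = (kronPow A t).mulVec (wp x))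
    (hfstar_prob : ∀ x, (∀ u, 0 ≤ fstar x u) ∧ ∑ u, fstar x u = 1)
    (hf_prob : ∀ x, (∀ u, 0 < f x u) ∧ ∑ u, f x u = 1)
    (ε : ℝ) (hε : ∑ x, μ x * klDiv (fstar x) (f x) ≤ ε)
    (β : (Fin t → Fin K) → ℝ)
    (θ : (Fin t → Fin V) → ℝ)
    (hθ : θ = (kronPow (leftPinv A) t).transpose.mulVec β) :
    ∑ x, μ x * (∑ z, β z * wp x z - ∑ u, θ u * f x u) ^ 2 ≤
      2 * (∑ z, β z ^ 2) * l1CondNum (leftPinv A) ^ (2 * t) * ε := by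
  subst hθ
  have hA : A.rank = Fintype.card (Fin K) := by rw [hrank, Fintype.card_fin]
  set C := 2 * (∑ z, β z ^ 2) * l1CondNum (leftPinv A) ^ (2 * t)
  have hC : 0 ≤ C := by
    have := l1CondNum_nonneg (leftPinv A)
    positivity
  calc ∑ x, μ x * (∑ z, β z * wp x z - ∑ u, _ * f x u) ^ 2
      ≤ ∑ x, μ x * (C * klDiv (fstar x) (f x)) := by
        gcongr with x
        · exact hμ_nonneg x
        · exact sq_recovery_error_le_klDiv A hA (wp x) (hfstar x) (hfstar_prob x).1
            (hf_prob x).1 (hfstar_prob x).2 (hf_prob x).2 β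
    _ = C * ∑ x, μ x * klDiv (fstar x) (f x) := by
        rw [mul_sum]
        exact sum_congr rfl fun x _ => by ring
    _ ≤ C * ε := by gcongr

/-- Robustness of linear recovery: if the exact `t`-word posterior is
`f*(x) = A^{⊗t} vec(E[w^{⊗t}|x])` and `E_x[KL(f*(x) ‖ f(x))] ≤ ε`, then with
`θ = ((A†)^{⊗t})ᵀ β` one has
`E_x[(E[P(w)|x] - θᵀ f(x))²] ≤ 2 ‖β‖₂² κ(A†)^{2t} ε`. -/
theorem robust_linear_recovery {V K t : ℕ} {X : Type*} [Fintype X]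
    (A : Matrix (Fin V) (Fin K) ℝ) (hrank : A.rank = K)
    (μ : X → ℝ) (hμ_nonneg : ∀ x, 0 ≤ μ x) (hμ_sum : ∑ x, μ x = 1)
    (wp : X → (Fin t → Fin K) → ℝ)
    (fstar f : X → (Fin t → Fin V) → ℝ)
    (hfstar : ∀ x, fstar x = (kronPow A t).mulVec (wp x))
    (hfstar_prob : ∀ x, (∀ u, 0 ≤ fstar x u) ∧ ∑ u, fstar x u = 1)
    (hf_prob : ∀ x, (∀ u, 0 < f x u) ∧ ∑ u, f x u = 1)
    (ε : ℝ) (hε : ∑ x, μ x * klDiv (fstar x) (f x) ≤ ε)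
    (β : (Fin t → Fin K) → ℝ)
    (θ : (Fin t → Fin V) → ℝ)
    (hθ : θ = (kronPow (leftPinv A) t).transpose.mulVec β) :
    ∑ x, μ x * (∑ z, β z * wp x z - ∑ u, θ u * f x u) ^ 2 ≤
      2 * (∑ z, β z ^ 2) * l1CondNum (leftPinv A) ^ (2 * t) * ε :=
  robust_linear_recovery_general A hrank μ hμ_nonneg wp fstar f hfstar hfstar_prob hf_prob ε hε β θ
    hθ
end

section
/- In the contrastive topic model setup, the likelihood ratio representation satisfies g(x, x') = (1/P(x')) · ∑_{z_1,...,z_t} (∏_{i=1}^t A_{x'_i, z_i}) · E[∏_i w_{z_i} | x], i.e., P(x')·g(x, x') is a linear functional of the posterior moment tensor E[w^{⊗t} | x] given by the row of A^{⊗t} corresponding to x'. -/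
/-- In the contrastive topic model setup, the likelihood-ratio representation
satisfies `g(x,x') = (1/P(x')) ∑_z (∏ i, A_{x'_i, z_i}) E[∏ i, w_{z_i} | x]`,
i.e. `P(x')·g(x,x')` is the linear functional of the posterior moment tensor
`E[w^{⊗t} | x]` given by the row of `A^{⊗t}` indexed by `x'`. -/
theorem contrastive_repr_linear_in_moments
    {V K S m t : ℕ} (A : Matrix (Fin V) (Fin K) ℝ)
    (hA_nonneg : ∀ v k, 0 ≤ A v k) (hA_col : ∀ k, ∑ v, A v k = 1)
    (Δ : Fin S → ℝ) (hΔ_nonneg : ∀ s, 0 ≤ Δ s) (hΔ_sum : ∑ s, Δ s = 1)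
    (W : Fin S → Fin K → ℝ)
    (hW_nonneg : ∀ s k, 0 ≤ W s k) (hW_sum : ∀ s, ∑ k, W s k = 1)
    -- the document `x` and the short document `x'` of `t` words
    (x : Fin m → Fin V) (x' : Fin t → Fin V)
    (lik : Fin S → ℝ) (hlik : ∀ s, lik s = ∏ j, A.mulVec (W s) (x j))
    (Z : ℝ) (hZ : Z = ∑ s, Δ s * lik s) (hZ_pos : 0 < Z)
    -- marginal probability of `x'`
    (Px' : ℝ) (hPx' : Px' = ∑ s, Δ s * ∏ i, A.mulVec (W s) (x' i))
    (hPx'_pos : 0 < Px')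
    -- `t`-th posterior moment tensor `E[w^{⊗t} | x]`
    (Wpost : (Fin t → Fin K) → ℝ)
    (hWpost : ∀ z, Wpost z = (∑ s, Δ s * lik s * ∏ i, W s (z i)) / Z)
    -- `g(x,x') = P(x, x' | y=1) / (P(x) P(x'))`
    (g : ℝ)
    (hg : g = (∑ s, Δ s * lik s * ∏ i, A.mulVec (W s) (x' i)) / (Z * Px')) :
    g = (1 / Px') *
      ∑ z : Fin t → Fin K, (∏ i, A (x' i) (z i)) * Wpost z := by
  have key : ∑ z : Fin t → Fin K, (∏ i, A (x' i) (z i)) * Wpost z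
      = (∑ s, Δ s * lik s * ∏ i, A.mulVec (W s) (x' i)) / Z := by
    simp only [hWpost, ← mul_div_assoc]
    rw [← Finset.sum_div]
    congr 1
    simp only [Finset.mul_sum]
    rw [Finset.sum_comm]
    apply Finset.sum_congr rfl
    intro s _
    simp only [Matrix.mulVec, dotProduct, Fintype.prod_sum,
      Finset.mul_sum]
    apply Finset.sum_congr rfl
    intro z _
    rw [Finset.prod_mul_distrib]
    ring
  rw [hg, key, one_div, inv_mul_eq_div, div_div]
end
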